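/- (Theorem 2.5 of the paper in the case μ = 0, classical Fourier transform.) Assume in addition that ψ̂(t) > 0 for almost every t ∈ ℝⁿ. Let f : ℝⁿ → ℝ be integrable with an integrable Fourier transform f̂ satisfying f(x) = (2π)^{−n} ∫_{ℝⁿ} e^{i⟨x,t⟩} f̂(t) dt for all x, and suppose c_f² := (2π)^{−n} ∫_{ℝⁿ} |f̂(t)|² (ψ̂(t))^{−1} dt < ∞. Let u_1, …, u_M be the Lagrange basis functions, i.e. (u_1(x), …, u_M(x))ᵀ = U(x) where U(x), V(x) is the unique solution of A U(x) + P V(x) = R(x), Pᵀ U(x) = S(x), with R(x) := (ψ(x − x_1), …, ψ(x − x_M))ᵀ and S(x) := (p_1(x), …, p_Q(x))ᵀ, and let s(x) := Σ_{j=1}^M f(x_j) u_j(x) be the interpolant of f. Then for every x ∈ ℝⁿ, |s(x) − f(x)| ≤ κ_q(x) · c_f, where κ_q(x)² := min{ Uᵀ A U − 2 Uᵀ R(x) + ψ(0) : U ∈ ℝ^M, Pᵀ U = S(x) }. -/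

import Mathlib

/-!
With weights `a = (u₁(x), …, u_M(x), -1)` at the points `z = (x₁, …, x_M, x)`, the error is
`s(x) - f(x) = ∑ aᵢ f(zᵢ) = (2π)⁻ⁿ ∫ g f̂` where `g(t) = ∑ aᵢ e^{i⟨zᵢ,t⟩}`. Cauchy–Schwarz with
weight `ψ̂` bounds this by `√((2π)⁻ⁿ ∫ |g|² ψ̂) · c_f`, and expanding `|g|²` turns the first factor
into `√(∑ aᵢ aₖ ψ(zᵢ - zₖ)) = √(Uᵀ A U - 2 Uᵀ R(x) + ψ(0))` at `U = U(x)`. Finally `U(x)` solves the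
saddle point system of the constrained quadratic problem and `A` is positive semidefinite on
`ker Pᵀ`, so `U(x)` is a minimiser and this value is `κ_q(x)²`.
-/

open MeasureTheory Matrix

/-- e^{i⟨y,t⟩}, with the Euclidean inner product on ℝⁿ. -/
noncomputable def expI {n : ℕ} (y t : EuclideanSpace ℝ (Fin n)) : ℂ :=
  Complex.exp (Complex.I * ((inner ℝ y t : ℝ) : ℂ))

/-- The constant (2π)^{−n}. -/
noncomputable def c2pin (n : ℕ) : ℝ := ((2 * Real.pi) ^ n)⁻¹

theorem le_sqrt_mul_sqrt_of_forall_pos {a K C : ℝ} (hK : 0 ≤ K) (hC : 0 ≤ C)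
    (h : ∀ l : ℝ, 0 < l → a ≤ (l * K + C / l) / 2) :
    a ≤ √K * √C := by
  rw [← Real.sqrt_mul hK]
  rcases le_or_gt a 0 with ha | ha
  · exact ha.trans (Real.sqrt_nonneg _)
  rw [Real.le_sqrt ha.le (mul_nonneg hK hC)]
  rcases hK.eq_or_lt with rfl | hKpos
  · have := h ((C + 1) / a) (by positivity)
    field_simp at this
    nlinarith
  · have := h (a / K) (by positivity)
    field_simp at this
    nlinarith

theorem norm_integral_mul_le_sqrt_mul_sqrt {α : Type*} [MeasurableSpace α] {μ : Measure α}
    {g h : α → ℂ} {w : α → ℝ} (hw : ∀ᵐ t ∂μ, 0 < w t)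
    (hg : Integrable (fun t => ‖g t‖ ^ 2 * w t) μ)
    (hh : Integrable (fun t => ‖h t‖ ^ 2 * (w t)⁻¹) μ) :
    ‖∫ t, g t * h t ∂μ‖ ≤
      √(∫ t, ‖g t‖ ^ 2 * w t ∂μ) * √(∫ t, ‖h t‖ ^ 2 * (w t)⁻¹ ∂μ) := by
  refine le_sqrt_mul_sqrt_of_forall_pos
    (integral_nonneg_of_ae (hw.mono fun t ht => by positivity))
    (integral_nonneg_of_ae (hw.mono fun t ht => by positivity)) fun l hl => ?_
  have hamgm : ∀ᵐ t ∂μ,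
      ‖g t * h t‖ ≤ (l * (‖g t‖ ^ 2 * w t) + ‖h t‖ ^ 2 * (w t)⁻¹ / l) / 2 := by
    filter_upwards [hw] with t ht
    rw [norm_mul]
    have := sq_nonneg (l * w t * ‖g t‖ - ‖h t‖)
    field_simp
    nlinarith
  calc ‖∫ t, g t * h t ∂μ‖ ≤ ∫ t, ‖g t * h t‖ ∂μ := norm_integral_le_integral_norm _
    _ ≤ ∫ t, (l * (‖g t‖ ^ 2 * w t) + ‖h t‖ ^ 2 * (w t)⁻¹ / l) / 2 ∂μ :=
      integral_mono_of_nonneg (ae_of_all _ fun _ => norm_nonneg _)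
        (((hg.const_mul l).add (hh.div_const l)).div_const 2) hamgm
    _ = _ := by
      rw [integral_div, integral_add (hg.const_mul l) (hh.div_const l), integral_const_mul,
        integral_div]

theorem dotProduct_mulVec_sub_two_mul_le {𝕜 m p : Type*} [Field 𝕜] [LinearOrder 𝕜]
    [IsStrictOrderedRing 𝕜] [Fintype m] [Fintype p]
    {A : Matrix m m 𝕜} {P : Matrix m p 𝕜} {R W W' : m → 𝕜} {V : p → 𝕜}
    (hAT : Aᵀ = A) (hpsd : ∀ d, Pᵀ *ᵥ d = 0 → 0 ≤ d ⬝ᵥ (A *ᵥ d))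
    (hW : A *ᵥ W + P *ᵥ V = R) (hW' : Pᵀ *ᵥ W' = Pᵀ *ᵥ W) :
    W ⬝ᵥ (A *ᵥ W) - 2 * (W ⬝ᵥ R) ≤ W' ⬝ᵥ (A *ᵥ W') - 2 * (W' ⬝ᵥ R) := by
  set d := W' - W
  have hPd : Pᵀ *ᵥ d = 0 := by rw [mulVec_sub, hW', sub_self]
  have hsymm : W ⬝ᵥ (A *ᵥ d) = d ⬝ᵥ (A *ᵥ W) := by
    rw [dotProduct_mulVec, ← mulVec_transpose, hAT, dotProduct_comm]
  have hdR : d ⬝ᵥ R = d ⬝ᵥ (A *ᵥ W) := by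
    rw [← hW, dotProduct_add, dotProduct_mulVec d P, ← mulVec_transpose, hPd, zero_dotProduct,
      add_zero]
  have hW'd : W' = W + d := by simp [d]
  have := hpsd d hPd
  rw [hW'd, mulVec_add, dotProduct_add, add_dotProduct, add_dotProduct, add_dotProduct, hsymm,
    hdR]
  linarith

theorem sum_mul_eval_eq_zero_of_mem_span {σ m ι : Type*} [Fintype m] {x : m → σ → ℝ}
    {pb : ι → MvPolynomial σ ℝ} {d : m → ℝ}
    (h : ∀ i, ∑ j, d j * MvPolynomial.eval (x j) (pb i) = 0)
    {p : MvPolynomial σ ℝ} (hp : p ∈ Submodule.span ℝ (Set.range pb)) :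
    ∑ j, d j * MvPolynomial.eval (x j) p = 0 := by
  induction hp using Submodule.span_induction with
  | mem _ hq => obtain ⟨i, rfl⟩ := hq; exact h i
  | zero => simp
  | add _ _ _ _ h₁ h₂ => simp [mul_add, Finset.sum_add_distrib, h₁, h₂]
  | smul r _ _ h₁ => simp [mul_left_comm _ r, ← Finset.mul_sum, h₁]

section Fourier

variable {n : ℕ} {ι : Type*} [Fintype ι]

local notation "E" => EuclideanSpace ℝ (Fin n)

theorem norm_expI (y t : E) : ‖expI y t‖ = 1 := by
  simp [expI, Complex.norm_exp, Complex.mul_re]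

@[fun_prop]
theorem continuous_expI (y : E) : Continuous (expI y) := by
  unfold expI
  fun_prop

theorem expI_mul_expI (y z t : E) : expI y t * expI z t = expI (y + z) t := by
  simp only [expI, ← Complex.exp_add, inner_add_left]
  push_cast
  ring_nf

theorem conj_expI (y t : E) : starRingEnd ℂ (expI y t) = expI (-y) t := by
  simp [expI, ← Complex.exp_conj, inner_neg_left]

theorem MeasureTheory.Integrable.expI_mul {φhat : E → ℂ} (hφ : Integrable φhat) (y : E) :
    Integrable fun t => expI y t * φhat t :=
  hφ.bdd_mul (continuous_expI y).aestronglyMeasurable (ae_of_all _ fun t => (norm_expI y t).le)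

def IsFourierPair (φ : E → ℝ) (φhat : E → ℂ) : Prop :=
  ∀ y, (φ y : ℂ) = (c2pin n : ℂ) * ∫ t, expI y t * φhat t

noncomputable def expSum (a : ι → ℝ) (z : ι → E) (t : E) : ℂ :=
  ∑ j, (a j : ℂ) * expI (z j) t

theorem continuous_expSum (a : ι → ℝ) (z : ι → E) : Continuous (expSum a z) := by
  unfold expSum
  fun_prop

theorem norm_expSum_le (a : ι → ℝ) (z : ι → E) (t : E) : ‖expSum a z t‖ ≤ ∑ j, |a j| :=
  (norm_sum_le _ _).trans_eq <| by simp [norm_expI]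

theorem norm_expSum_sq (a : ι → ℝ) (z : ι → E) (t : E) :
    ((‖expSum a z t‖ ^ 2 : ℝ) : ℂ) =
      expSum (fun p : ι × ι => a p.1 * a p.2) (fun p => z p.1 - z p.2) t := by
  rw [Complex.ofReal_pow, ← Complex.mul_conj', expSum, expSum, map_sum, Finset.sum_mul_sum,
    ← Finset.univ_product_univ, Finset.sum_product]
  refine Finset.sum_congr rfl fun j _ => Finset.sum_congr rfl fun k _ => ?_
  rw [map_mul, Complex.conj_ofReal, conj_expI, sub_eq_add_neg, ← expI_mul_expI]
  push_cast
  ring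

theorem IsFourierPair.sum_mul {φ : E → ℝ} {φhat : E → ℂ} (hφ : IsFourierPair φ φhat)
    (hint : Integrable φhat) (a : ι → ℝ) (z : ι → E) :
    ((∑ j, a j * φ (z j) : ℝ) : ℂ) = (c2pin n : ℂ) * ∫ t, expSum a z t * φhat t := by
  simp only [expSum, Finset.sum_mul, mul_assoc]
  rw [integral_finsetSum _ fun j _ => (hint.expI_mul (z j)).const_mul _, Finset.mul_sum]
  push_cast
  refine Finset.sum_congr rfl fun j _ => ?_
  rw [hφ, integral_const_mul]
  ring

theorem IsFourierPair.neg {φ : E → ℝ} {w : E → ℝ} (hφ : IsFourierPair φ fun t => (w t : ℂ))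
    (y : E) : φ (-y) = φ y := by
  have h : (φ (-y) : ℂ) = starRingEnd ℂ (φ y) := by
    rw [hφ, hφ, map_mul, Complex.conj_ofReal, ← integral_conj]
    simp [conj_expI]
  exact_mod_cast h.trans (Complex.conj_ofReal _)

theorem IsFourierPair.sum_sum_mul_mul {φ : E → ℝ} {w : E → ℝ}
    (hφ : IsFourierPair φ fun t => (w t : ℂ)) (hw : Integrable w) (a : ι → ℝ) (z : ι → E) :
    ∑ j, ∑ k, a j * a k * φ (z j - z k) = c2pin n * ∫ t, ‖expSum a z t‖ ^ 2 * w t := by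
  have h := hφ.sum_mul hw.ofReal (fun p : ι × ι => a p.1 * a p.2) fun p => z p.1 - z p.2
  rw [← Finset.sum_product', Finset.univ_product_univ]
  simp only [← norm_expSum_sq, ← Complex.ofReal_mul] at h
  exact_mod_cast h

theorem IsFourierPair.abs_sum_mul_le {f ψ w : E → ℝ} {fhat : E → ℂ}
    (hf : IsFourierPair f fhat) (hfhat : Integrable fhat)
    (hψ : IsFourierPair ψ fun t => (w t : ℂ)) (hw : Integrable w) (hw_pos : ∀ᵐ t, 0 < w t)
    (hfw : Integrable fun t => ‖fhat t‖ ^ 2 * (w t)⁻¹) (a : ι → ℝ) (z : ι → E) :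
    |∑ j, a j * f (z j)| ≤
      √(∑ j, ∑ k, a j * a k * ψ (z j - z k)) * √(c2pin n * ∫ t, ‖fhat t‖ ^ 2 * (w t)⁻¹) := by
  have hc : 0 ≤ c2pin n := by unfold c2pin; positivity
  have hg : Integrable fun t => ‖expSum a z t‖ ^ 2 * w t :=
    hw.bdd_mul ((continuous_expSum a z).norm.pow 2).aestronglyMeasurable
      (ae_of_all _ fun t => by
        simpa using pow_le_pow_left₀ (norm_nonneg _) (norm_expSum_le a z t) 2)
  rw [hψ.sum_sum_mul_mul hw, Real.sqrt_mul hc, Real.sqrt_mul hc]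
  calc |∑ j, a j * f (z j)| = ‖((∑ j, a j * f (z j) : ℝ) : ℂ)‖ := by
        rw [Complex.norm_real, Real.norm_eq_abs]
    _ = c2pin n * ‖∫ t, expSum a z t * fhat t‖ := by
        rw [hf.sum_mul hfhat, norm_mul, Complex.norm_real, Real.norm_of_nonneg hc]
    _ ≤ c2pin n * (√(∫ t, ‖expSum a z t‖ ^ 2 * w t) * √(∫ t, ‖fhat t‖ ^ 2 * (w t)⁻¹)) := by
        gcongr
        exact norm_integral_mul_le_sqrt_mul_sqrt hw_pos hg hfw
    _ = _ := by
        nth_rw 1 [← Real.mul_self_sqrt hc]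
        ring

end Fourier

theorem dotProduct_mulVec_eq_sum_sum {m F : Type*} [Fintype m] [Sub F] {φ : F → ℝ} {x : m → F}
    {A : Matrix m m ℝ} (hA : ∀ j k, A j k = φ (x j - x k)) (d : m → ℝ) :
    d ⬝ᵥ (A *ᵥ d) = ∑ j, ∑ k, d j * d k * φ (x j - x k) := by
  simp only [dotProduct, mulVec, hA, Finset.mul_sum]
  exact Finset.sum_congr rfl fun j _ => Finset.sum_congr rfl fun k _ => by ring

theorem sum_sum_elim_mul_mul_sub {m F : Type*} [Fintype m] [AddCommGroup F] {φ : F → ℝ}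
    (hφ : ∀ y, φ (-y) = φ y) {x : m → F} {A : Matrix m m ℝ} (hA : ∀ j k, A j k = φ (x j - x k))
    (x₀ : F) (W : m → ℝ) :
    ∑ i : m ⊕ Unit, ∑ k : m ⊕ Unit,
        Sum.elim W (fun _ : Unit => -1) i * Sum.elim W (fun _ => -1) k *
        φ (Sum.elim x (fun _ => x₀) i - Sum.elim x (fun _ => x₀) k) =
      W ⬝ᵥ (A *ᵥ W) - 2 * (W ⬝ᵥ fun j => φ (x₀ - x j)) + φ 0 := by
  have hsymm : ∀ j, φ (x j - x₀) = φ (x₀ - x j) := fun j => by rw [← neg_sub, hφ]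
  rw [dotProduct_mulVec_eq_sum_sum hA]
  simp only [Fintype.sum_sum_type, Sum.elim_inl, Sum.elim_inr, Finset.univ_unique,
    Finset.sum_singleton, hsymm, sub_self, dotProduct, mul_neg_one, neg_mul, one_mul,
    Finset.sum_neg_distrib, Finset.sum_add_distrib]
  ring

theorem dotProduct_mulVec_nonneg_of_condPosDef {n q : ℕ} {m ι : Type*} [Fintype m]
    {x : m → EuclideanSpace ℝ (Fin n)} {pb : ι → MvPolynomial (Fin n) ℝ}
    {ψ : EuclideanSpace ℝ (Fin n) → ℝ}
    (hspan : ∀ p : MvPolynomial (Fin n) ℝ, p.totalDegree < q →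
      p ∈ Submodule.span ℝ (Set.range pb))
    (hcpd : ∀ c : m → ℝ, c ≠ 0 →
      (∀ p : MvPolynomial (Fin n) ℝ, p.totalDegree < q →
        ∑ j, c j * MvPolynomial.eval (fun l => x j l) p = 0) →
      0 < ∑ j, ∑ k, c j * c k * ψ (x j - x k))
    {A : Matrix m m ℝ} (hA : ∀ j k, A j k = ψ (x j - x k))
    {P : Matrix m ι ℝ} (hP : ∀ j i, P j i = MvPolynomial.eval (fun l => x j l) (pb i))
    {d : m → ℝ} (hd : Pᵀ *ᵥ d = 0) : 0 ≤ d ⬝ᵥ (A *ᵥ d) := by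
  rcases eq_or_ne d 0 with rfl | hd0
  · simp
  have hmoments : ∀ i, ∑ j, d j * MvPolynomial.eval (fun l => x j l) (pb i) = 0 := fun i => by
    simpa [mulVec, dotProduct, hP, mul_comm] using congrFun hd i
  have := hcpd d hd0 fun p hp => sum_mul_eval_eq_zero_of_mem_span hmoments (hspan p hp)
  exact (dotProduct_mulVec_eq_sum_sum hA d).symm ▸ this.le

theorem wu_schaback_error_bound_mu_zero_general
    (n M q Q : ℕ)
    (x : Fin M → EuclideanSpace ℝ (Fin n))
    (pb : Fin Q → MvPolynomial (Fin n) ℝ)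
    (hspan : ∀ p : MvPolynomial (Fin n) ℝ, p.totalDegree < q →
      p ∈ Submodule.span ℝ (Set.range pb))
    (ψ : EuclideanSpace ℝ (Fin n) → ℝ)
    (ψhat : EuclideanSpace ℝ (Fin n) → ℝ)
    (hψhat_int : Integrable ψhat)
    (hψhat_pos : ∀ᵐ t : EuclideanSpace ℝ (Fin n), 0 < ψhat t)
    (hψinv : ∀ y : EuclideanSpace ℝ (Fin n),
      (ψ y : ℂ) = (c2pin n : ℂ) * ∫ t, expI y t * (ψhat t : ℂ))
    (hcpd : ∀ c : Fin M → ℝ, c ≠ 0 →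
      (∀ p : MvPolynomial (Fin n) ℝ, p.totalDegree < q →
        ∑ j, c j * MvPolynomial.eval (fun l => x j l) p = 0) →
      0 < ∑ j, ∑ k, c j * c k * ψ (x j - x k))
    (A : Matrix (Fin M) (Fin M) ℝ) (hA : ∀ j k, A j k = ψ (x j - x k))
    (P : Matrix (Fin M) (Fin Q) ℝ)
    (hP : ∀ j i, P j i = MvPolynomial.eval (fun l => x j l) (pb i))
    -- the approximated function f and its Fourier transform
    (f : EuclideanSpace ℝ (Fin n) → ℝ)
    (fhat : EuclideanSpace ℝ (Fin n) → ℂ) (hfhat_int : Integrable fhat)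
    (hfinv : ∀ y : EuclideanSpace ℝ (Fin n),
      (f y : ℂ) = (c2pin n : ℂ) * ∫ t, expI y t * fhat t)
    (hcf_fin : Integrable (fun t : EuclideanSpace ℝ (Fin n) => ‖fhat t‖ ^ 2 * (ψhat t)⁻¹))
    -- the Lagrange basis functions u_j, given through U(x), V(x)
    (U : EuclideanSpace ℝ (Fin n) → Fin M → ℝ)
    (V : EuclideanSpace ℝ (Fin n) → Fin Q → ℝ)
    (hUV : ∀ y : EuclideanSpace ℝ (Fin n),
      A *ᵥ U y + P *ᵥ V y = (fun j => ψ (y - x j)) ∧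
      Pᵀ *ᵥ U y = (fun i => MvPolynomial.eval (fun l => y l) (pb i))) :
    ∀ x₀ : EuclideanSpace ℝ (Fin n), ∀ κsq : ℝ,
      IsLeast {v : ℝ | ∃ W : Fin M → ℝ,
          Pᵀ *ᵥ W = (fun i => MvPolynomial.eval (fun l => x₀ l) (pb i)) ∧
          v = W ⬝ᵥ (A *ᵥ W) - 2 * (W ⬝ᵥ (fun j => ψ (x₀ - x j))) + ψ 0} κsq →
      |(∑ j, f (x j) * U x₀ j) - f x₀| ≤
        Real.sqrt κsq * Real.sqrt (c2pin n * ∫ t, ‖fhat t‖ ^ 2 * (ψhat t)⁻¹) := by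
  rintro x₀ κsq ⟨⟨W, hW, hκ⟩, -⟩
  have hψeven : ∀ y, ψ (-y) = ψ y := IsFourierPair.neg hψinv
  have hAT : Aᵀ = A := by
    ext j k
    rw [transpose_apply, hA, hA, ← hψeven, neg_sub]
  -- `U x₀` minimises the Kriging objective over the constraint set
  have hopt := dotProduct_mulVec_sub_two_mul_le hAT
    (fun d hd => dotProduct_mulVec_nonneg_of_condPosDef hspan hcpd hA hP hd) (hUV x₀).1
    (hW.trans (hUV x₀).2.symm)
  -- the error is the combination `∑ aᵢ f(zᵢ)` with weights `U x₀` at the nodes and `-1` at `x₀`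
  calc |(∑ j, f (x j) * U x₀ j) - f x₀|
      = |∑ i, Sum.elim (U x₀) (fun _ : Unit => -1) i * f (Sum.elim x (fun _ => x₀) i)| := by
        simp [Fintype.sum_sum_type, mul_comm, sub_eq_add_neg]
    _ ≤ _ := IsFourierPair.abs_sum_mul_le hfinv hfhat_int hψinv hψhat_int hψhat_pos hcf_fin _ _
    _ ≤ √κsq * √(c2pin n * ∫ t, ‖fhat t‖ ^ 2 * (ψhat t)⁻¹) := by
        rw [sum_sum_elim_mul_mul_sub hψeven hA, hκ]
        exact mul_le_mul_of_nonneg_right (Real.sqrt_le_sqrt (by linarith)) (Real.sqrt_nonneg _)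

/-- Theorem 2.5 of the paper in the case μ = 0: for the interpolant
s(x) = Σ_j f(x_j) u_j(x) built from the Lagrange basis functions u_j, the error satisfies
|s(x) − f(x)| ≤ κ_q(x) · c_f, where κ_q(x)² is the minimum of the Kriging quadratic form
and c_f² = (2π)^{−n} ∫ |f̂(t)|² (ψ̂(t))⁻¹ dt. -/
theorem wu_schaback_error_bound_mu_zero
    (n M q Q : ℕ) (hn : 0 < n) (hM : 0 < M) (hq : 0 < q)
    (x : Fin M → EuclideanSpace ℝ (Fin n))
    (hx : Function.Injective x)
    (pb : Fin Q → MvPolynomial (Fin n) ℝ)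
    (hdeg : ∀ i, (pb i).totalDegree < q)
    (hind : LinearIndependent ℝ pb)
    (hspan : ∀ p : MvPolynomial (Fin n) ℝ, p.totalDegree < q →
      p ∈ Submodule.span ℝ (Set.range pb))
    (huni : ∀ p : MvPolynomial (Fin n) ℝ, p.totalDegree < q →
      (∀ j, MvPolynomial.eval (fun l => x j l) p = 0) → p = 0)
    (ψ : EuclideanSpace ℝ (Fin n) → ℝ) (hψcont : Continuous ψ)
    (ψhat : EuclideanSpace ℝ (Fin n) → ℝ)
    (hψhat_nonneg : ∀ t, 0 ≤ ψhat t)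
    (hψhat_int : Integrable ψhat)
    (hψhat_pos : ∀ᵐ t : EuclideanSpace ℝ (Fin n), 0 < ψhat t)
    (hψinv : ∀ y : EuclideanSpace ℝ (Fin n),
      (ψ y : ℂ) = (c2pin n : ℂ) * ∫ t, expI y t * (ψhat t : ℂ))
    (hcpd : ∀ c : Fin M → ℝ, c ≠ 0 →
      (∀ p : MvPolynomial (Fin n) ℝ, p.totalDegree < q →
        ∑ j, c j * MvPolynomial.eval (fun l => x j l) p = 0) →
      0 < ∑ j, ∑ k, c j * c k * ψ (x j - x k))
    (A : Matrix (Fin M) (Fin M) ℝ) (hA : ∀ j k, A j k = ψ (x j - x k))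
    (P : Matrix (Fin M) (Fin Q) ℝ)
    (hP : ∀ j i, P j i = MvPolynomial.eval (fun l => x j l) (pb i))
    -- the approximated function f and its Fourier transform
    (f : EuclideanSpace ℝ (Fin n) → ℝ) (hf_int : Integrable f)
    (fhat : EuclideanSpace ℝ (Fin n) → ℂ) (hfhat_int : Integrable fhat)
    (hfinv : ∀ y : EuclideanSpace ℝ (Fin n),
      (f y : ℂ) = (c2pin n : ℂ) * ∫ t, expI y t * fhat t)
    (hcf_fin : Integrable (fun t : EuclideanSpace ℝ (Fin n) => ‖fhat t‖ ^ 2 * (ψhat t)⁻¹))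
    -- the Lagrange basis functions u_j, given through U(x), V(x)
    (U : EuclideanSpace ℝ (Fin n) → Fin M → ℝ)
    (V : EuclideanSpace ℝ (Fin n) → Fin Q → ℝ)
    (hUV : ∀ y : EuclideanSpace ℝ (Fin n),
      A *ᵥ U y + P *ᵥ V y = (fun j => ψ (y - x j)) ∧
      Pᵀ *ᵥ U y = (fun i => MvPolynomial.eval (fun l => y l) (pb i))) :
    ∀ x₀ : EuclideanSpace ℝ (Fin n), ∀ κsq : ℝ,
      IsLeast {v : ℝ | ∃ W : Fin M → ℝ,
          Pᵀ *ᵥ W = (fun i => MvPolynomial.eval (fun l => x₀ l) (pb i)) ∧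
          v = W ⬝ᵥ (A *ᵥ W) - 2 * (W ⬝ᵥ (fun j => ψ (x₀ - x j))) + ψ 0} κsq →
      |(∑ j, f (x j) * U x₀ j) - f x₀| ≤
        Real.sqrt κsq * Real.sqrt (c2pin n * ∫ t, ‖fhat t‖ ^ 2 * (ψhat t)⁻¹) :=
  wu_schaback_error_bound_mu_zero_general n M q Q x pb hspan ψ ψhat hψhat_int hψhat_pos hψinv hcpd A
    hA P hP f fhat hfhat_int hfinv hcf_fin U V hUV
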